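/- arXiv:2511.14067 — 3 statements merged into one kernel-verified Lean document; each statement's English description precedes it below -/
import Mathlib

section
/- Let G = (V, E, (C^WW, C^WR)) be a hyper-polygraph, Φ_G its Boolean encoding, and P its set of 2-width-cycle clauses. Then Φ_G and F = Φ_G ∧ ⋀_{ρ ∈ P} ρ are equisatisfiable relative to acyclicity: there exists an assignment satisfying Φ_G whose induced graph is acyclic if and only if there exists an assignment satisfying F whose induced graph is acyclic. -/
namespace DBIso

/-! ### Operations, transactions and histories -/

/-- An operation: a read `R(x,v)` or a write `W(x,v)` on key `x` with value `v`. -/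
inductive Op (Key Val : Type) where
  | read  (k : Key) (v : Val)
  | write (k : Key) (v : Val)

variable {Key Val : Type}

/-- The key accessed by an operation. -/
def Op.key : Op Key Val → Key
  | .read k _ => k
  | .write k _ => k

/-- The value read or written by an operation. -/
def Op.val : Op Key Val → Val
  | .read _ w => w
  | .write _ w => w

/-- A transaction: a finite nonempty set of (identified) operations together with
a strict total order on them (the program order), modelled as a nonempty list of
operations tagged by pairwise distinct operation identifiers; the list order is
the program order `po`. -/
structure Txn (Key Val : Type) where
  ops : List (ℕ × Op Key Val)
  ops_nonempty : ops ≠ []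
  ids_nodup : (ops.map Prod.fst).Nodup

/-- The operation of `T` at position `i` (in program order). -/
def Txn.opAt (T : Txn Key Val) (i : Fin T.ops.length) : Op Key Val :=
  (T.ops.get i).2

/-- `T ⊢ W(x,v)`: `T` writes to key `x` and `v` is the po-last value it writes to `x`. -/
def Txn.FWrites (T : Txn Key Val) (x : Key) (v : Val) : Prop :=
  ∃ i : Fin T.ops.length, T.opAt i = Op.write x v ∧
    ∀ j : Fin T.ops.length, i < j → ∀ w : Val, T.opAt j ≠ Op.write x w

/-- `T ∈ WriteTx_x` : `T` writes to key `x`. -/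
def Txn.WritesKey (T : Txn Key Val) (x : Key) : Prop :=
  ∃ v : Val, T.FWrites x v

/-- `T ⊢ R(x,v)`: `T` reads `x` before writing to it and `v` is the value returned
by the po-first such read (equivalently, the po-first operation of `T` on `x` is a
read returning `v`). -/
def Txn.FReads (T : Txn Key Val) (x : Key) (v : Val) : Prop :=
  ∃ i : Fin T.ops.length, T.opAt i = Op.read x v ∧
    ∀ j : Fin T.ops.length, j < i → (T.opAt j).key ≠ x

/-- Internal consistency of a transaction: every read of a key `x` that is po-preceded
by an operation on `x` returns the value of the po-latest preceding operation on `x`. -/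
def Txn.Internal (T : Txn Key Val) : Prop :=
  ∀ i j : Fin T.ops.length, j < i → ∀ (x : Key) (v : Val),
    T.opAt i = Op.read x v → (T.opAt j).key = x →
    (∀ k : Fin T.ops.length, j < k → k < i → (T.opAt k).key ≠ x) →
    (T.opAt j).val = v

/-- A history: a finite set of transactions with pairwise disjoint operation sets,
together with the session order `SO` (a union of strict total orders on the disjoint
subsets, given by `sess`, partitioning the transactions), and a distinguished initial
transaction `init` (`T_⊥`) writing to every key and `SO`-preceding every other
transaction. -/
structure History (Key Val : Type) where
  txns : Set (Txn Key Val)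
  txns_finite : txns.Finite
  SO : Txn Key Val → Txn Key Val → Prop
  sess : Txn Key Val → ℕ
  init : Txn Key Val
  ops_disjoint : ∀ T ∈ txns, ∀ S ∈ txns, T ≠ S →
      ∀ i ∈ T.ops.map Prod.fst, i ∉ S.ops.map Prod.fst
  so_mem : ∀ T S, SO T S → T ∈ txns ∧ S ∈ txns
  so_irrefl : ∀ T, ¬ SO T T
  so_trans : ∀ T S U, SO T S → SO S U → SO T U
  so_total_sess : ∀ T ∈ txns, ∀ S ∈ txns, T ≠ S → sess T = sess S → SO T S ∨ SO S T
  so_sess : ∀ T S, SO T S → sess T = sess S ∨ T = init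
  init_mem : init ∈ txns
  init_writes : ∀ x : Key, ∃ v : Val, init.FWrites x v
  init_so : ∀ T ∈ txns, T ≠ init → SO init T

/-- `H ⊨ Int`: every transaction of `H` is internally consistent. -/
def History.SatInt (H : History Key Val) : Prop :=
  ∀ T ∈ H.txns, T.Internal

/-- `r` is a strict total order on the set `s`. -/
def IsStrictTotalOrderOn {α : Type*} (s : Set α) (r : α → α → Prop) : Prop :=
  (∀ a b, r a b → a ∈ s ∧ b ∈ s) ∧
  (∀ a, ¬ r a a) ∧
  (∀ a b c, r a b → r b c → r a c) ∧
  (∀ a ∈ s, ∀ b ∈ s, a ≠ b → r a b ∨ r b a)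

/-- `H` satisfies SER: `H ⊨ Int` and there is a strict total order `co` on the
transactions of `H` extending `SO` such that every read `S ⊢ R(x,v)` reads the
value written by the `co`-greatest `co`-predecessor of `S` writing `x`. -/
def History.SatSER (H : History Key Val) : Prop :=
  H.SatInt ∧
  ∃ co : Txn Key Val → Txn Key Val → Prop,
    IsStrictTotalOrderOn H.txns co ∧
    (∀ T S, H.SO T S → co T S) ∧
    ∀ S ∈ H.txns, ∀ (x : Key) (v : Val), S.FReads x v →
      ∃ T', co T' S ∧ T'.WritesKey x ∧
        (∀ T, co T S → T.WritesKey x → T = T' ∨ co T T') ∧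
        T'.FWrites x v

/-! ### Dependency graphs -/

/-- `(WR, WW, RW)` extend the history `H` to a dependency graph. -/
def IsDepGraph (H : History Key Val)
    (WR WW RW : Key → Txn Key Val → Txn Key Val → Prop) : Prop :=
  (∀ (x : Key) (T S : Txn Key Val), WR x T S → T ∈ H.txns ∧ S ∈ H.txns) ∧
  (∀ x : Key, ∀ S ∈ H.txns, (∃ v, S.FReads x v) → ∃! T, WR x T S) ∧
  (∀ (x : Key) (T S : Txn Key Val), WR x T S →
      T ≠ S ∧ ∃ v, T.FWrites x v ∧ S.FReads x v) ∧
  (∀ x : Key, IsStrictTotalOrderOn {T | T ∈ H.txns ∧ T.WritesKey x} (WW x)) ∧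
  (∀ (x : Key) (T S : Txn Key Val),
      RW x T S ↔ T ≠ S ∧ ∃ T', WR x T' T ∧ WW x T' S)

/-- A binary relation is acyclic iff its transitive closure is irreflexive. -/
def RelAcyclic {α : Type*} (r : α → α → Prop) : Prop :=
  ∀ a, ¬ Relation.TransGen r a a

/-- The union `SO ∪ WR ∪ WW ∪ RW` as a binary relation on transactions. -/
def DepUnion (H : History Key Val)
    (WR WW RW : Key → Txn Key Val → Txn Key Val → Prop) :
    Txn Key Val → Txn Key Val → Prop :=
  fun T S => H.SO T S ∨ (∃ x, WR x T S) ∨ (∃ x, WW x T S) ∨ (∃ x, RW x T S)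

/-- The relation `(SO ∪ WR ∪ WW) ; RW?`. -/
def SIRel (H : History Key Val)
    (WR WW RW : Key → Txn Key Val → Txn Key Val → Prop) :
    Txn Key Val → Txn Key Val → Prop :=
  fun T S => ∃ U, (H.SO T U ∨ (∃ x, WR x T U) ∨ (∃ x, WW x T U)) ∧
    (U = S ∨ ∃ x, RW x U S)

/-- `H` satisfies SI: `H ⊨ Int` and there exist `WR, WW, RW` extending `H` to a
dependency graph with `(SO ∪ WR ∪ WW) ; RW?` acyclic. -/
def History.SatSI (H : History Key Val) : Prop :=
  H.SatInt ∧ ∃ WR WW RW, IsDepGraph H WR WW RW ∧ RelAcyclic (SIRel H WR WW RW)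

/-! ### Labeled edges and hyper-polygraphs -/

/-- Dependency edge labels. -/
inductive DepLbl (Key : Type) where
  | SO
  | WR (x : Key)
  | WW (x : Key)
  | RW (x : Key)

/-- A directed labeled edge. -/
structure LEdge (V L : Type) where
  src : V
  dst : V
  lbl : L

variable {V L : Type}

abbrev DepEdge (V Key : Type) := LEdge V (DepLbl Key)
abbrev DepEdgeSet (V Key : Type) := Set (DepEdge V Key)

/-- There is an edge of `E` from `a` to `b`. -/
def EStep (E : Set (LEdge V L)) (a b : V) : Prop := ∃ l, LEdge.mk a b l ∈ E

/-- A set of labeled edges is cyclic iff some vertex has a nonempty edge path to itself. -/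
def EdgeCyclic (E : Set (LEdge V L)) : Prop := ∃ a, Relation.TransGen (EStep E) a a

/-- `a ⤳ b`: there is a (possibly empty) edge path of `E` from `a` to `b`. -/
def EReach (E : Set (LEdge V L)) (a b : V) : Prop := Relation.ReflTransGen (EStep E) a b

/-- A hyper-polygraph over the vertex type `V`: a known edge set `E` together with
the constraint collections `C^WW` and `C^WR`. -/
structure HyperPolygraph (V Key : Type) where
  E : DepEdgeSet V Key
  CWW : Set (DepEdgeSet V Key)
  CWR : Set (DepEdgeSet V Key)

/-- A directed labeled graph (given by its edge set `E'` over the same vertex set)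
is compatible with the hyper-polygraph `G`. -/
def Compatible (G : HyperPolygraph V Key) (E' : DepEdgeSet V Key) : Prop :=
  G.E ⊆ E' ∧
  (∀ (x : Key) (T T' S : V), T ≠ S →
      LEdge.mk T' T (DepLbl.WR x) ∈ E' → LEdge.mk T' S (DepLbl.WW x) ∈ E' →
      LEdge.mk T S (DepLbl.RW x) ∈ E') ∧
  (∀ C ∈ G.CWW ∪ G.CWR, ∃! e, e ∈ E' ∧ e ∈ C)

/-- A hyper-polygraph is SER-acyclic iff some acyclic graph is compatible with it. -/
def SERAcyclic (G : HyperPolygraph V Key) : Prop :=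
  ∃ E', Compatible G E' ∧ ¬ EdgeCyclic E'

/-- The vertex set of the hyper-polygraph of a history: its transactions. -/
abbrev History.Vert (H : History Key Val) : Type := {T : Txn Key Val // T ∈ H.txns}

/-- The hyper-polygraph of a history `H`. -/
def History.hpg (H : History Key Val) : HyperPolygraph H.Vert Key where
  E := {e | (e.lbl = DepLbl.SO ∧ H.SO e.src.1 e.dst.1) ∨
        (∃ (x : Key) (v : Val), e.lbl = DepLbl.WR x ∧
          e.dst.1.FReads x v ∧ e.src.1.FWrites x v ∧ e.src ≠ e.dst ∧
          (∀ T : H.Vert, T.1.FWrites x v → T ≠ e.dst → T = e.src))}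
  CWW := {C | ∃ (x : Key) (T S : H.Vert), T ≠ S ∧
        T.1.WritesKey x ∧ S.1.WritesKey x ∧
        C = {LEdge.mk T S (DepLbl.WW x), LEdge.mk S T (DepLbl.WW x)}}
  CWR := {C | ∃ (x : Key) (S : H.Vert) (v : Val), S.1.FReads x v ∧
        C = {e | ∃ T : H.Vert, T.1.FWrites x v ∧ T ≠ S ∧ e = LEdge.mk T S (DepLbl.WR x)}}

/-- The induced SI graph of a directed labeled graph:
`(E'_SO ∪ E'_WR ∪ E'_WW) ; (E'_RW)?`. -/
def InducedSI (E' : DepEdgeSet V Key) : V → V → Prop :=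
  fun a b => ∃ c : V,
    (LEdge.mk a c DepLbl.SO ∈ E' ∨ (∃ x, LEdge.mk a c (DepLbl.WR x) ∈ E') ∨
      (∃ x, LEdge.mk a c (DepLbl.WW x) ∈ E')) ∧
    (c = b ∨ ∃ x, LEdge.mk c b (DepLbl.RW x) ∈ E')

/-! ### Commit-order hyper-polygraphs -/

/-- Labels for commit-order hyper-polygraphs. -/
inductive COLbl (Key : Type) where
  | SO
  | WR (x : Key)
  | CO

abbrev COEdge (V Key : Type) := LEdge V (COLbl Key)

/-- A commit-order hyper-polygraph. -/
structure COHyperPolygraph (V Key : Type) where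
  E : Set (COEdge V Key)
  CCO : Set (Set (COEdge V Key))
  CWR : Set (Set (COEdge V Key))

/-- The commit-order hyper-polygraph of a history `H`. -/
def History.cohpg (H : History Key Val) : COHyperPolygraph H.Vert Key where
  E := {e | (e.lbl = COLbl.SO ∧ H.SO e.src.1 e.dst.1) ∨
        (∃ (x : Key) (v : Val), e.lbl = COLbl.WR x ∧
          e.dst.1.FReads x v ∧ e.src.1.FWrites x v ∧ e.src ≠ e.dst ∧
          (∀ T : H.Vert, T.1.FWrites x v → T ≠ e.dst → T = e.src))}
  CCO := {C | ∃ T S : H.Vert, T ≠ S ∧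
        C = {LEdge.mk T S COLbl.CO, LEdge.mk S T COLbl.CO}}
  CWR := {C | ∃ (x : Key) (S : H.Vert) (v : Val), S.1.FReads x v ∧
        C = {e | ∃ T : H.Vert, T.1.FWrites x v ∧ T ≠ S ∧ e = LEdge.mk T S (COLbl.WR x)}}

/-- A directed labeled graph (given by its edge set `E'`) is SER-compatible with the
commit-order hyper-polygraph of the history `H`. -/
def SERCompatible (H : History Key Val) (E' : Set (COEdge H.Vert Key)) : Prop :=
  H.cohpg.E ⊆ E' ∧
  (∀ C ∈ H.cohpg.CCO ∪ H.cohpg.CWR, ∃! e, e ∈ E' ∧ e ∈ C) ∧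
  (∀ (x : Key) (T₁ T₂ T₃ : H.Vert), T₁ ≠ T₂ →
      LEdge.mk T₁ T₃ (COLbl.WR x) ∈ E' → T₂.1.WritesKey x →
      LEdge.mk T₂ T₃ COLbl.CO ∈ E' → LEdge.mk T₂ T₁ COLbl.CO ∈ E')

/-- The read-from conditions of a dependency graph on a family `WR`. -/
def ReadFromConds (H : History Key Val)
    (WR : Key → Txn Key Val → Txn Key Val → Prop) : Prop :=
  (∀ (x : Key) (T S : Txn Key Val), WR x T S → T ∈ H.txns ∧ S ∈ H.txns) ∧
  (∀ x : Key, ∀ S ∈ H.txns, (∃ v, S.FReads x v) → ∃! T, WR x T S) ∧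
  (∀ (x : Key) (T S : Txn Key Val), WR x T S →
      T ≠ S ∧ ∃ v, T.FWrites x v ∧ S.FReads x v)

/-! ### The pruning transition system -/

/-- `{(S,T',RW,x) : (T,S,WR,x) ∈ E, S ≠ T'}`: the RW edges derived from the WW edge
`(T,T',WW,x)` and the WR edges of `E`. -/
def DerivedRWofWW (E : DepEdgeSet V Key) (T T' : V) (x : Key) : DepEdgeSet V Key :=
  {e | ∃ S : V, LEdge.mk T S (DepLbl.WR x) ∈ E ∧ S ≠ T' ∧
      e = LEdge.mk S T' (DepLbl.RW x)}

/-- `{(S,T',RW,x) : (T,T',WW,x) ∈ E, S ≠ T'}`: the RW edges derived from the WR edge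
`(T,S,WR,x)` and the WW edges of `E`. -/
def DerivedRWofWR (E : DepEdgeSet V Key) (T S : V) (x : Key) : DepEdgeSet V Key :=
  {e | ∃ T' : V, LEdge.mk T T' (DepLbl.WW x) ∈ E ∧ S ≠ T' ∧
      e = LEdge.mk S T' (DepLbl.RW x)}

/-- States of the pruning transition system: a triple `⟨E, C^WW, C^WR⟩` or the
terminal state `S#` (`bad`). -/
inductive PState (V Key : Type) where
  | node (E : DepEdgeSet V Key) (CWW CWR : Set (DepEdgeSet V Key)) : PState V Key
  | bad : PState V Key

/-- The pruning transition relation `↪`. -/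
inductive PruneStep : PState V Key → PState V Key → Prop where
  | noChoice {E : DepEdgeSet V Key} {CWW CWR : Set (DepEdgeSet V Key)}
      (h : (∅ : DepEdgeSet V Key) ∈ CWW ∪ CWR) :
      PruneStep (.node E CWW CWR) .bad
  | cyc {E : DepEdgeSet V Key} {CWW CWR : Set (DepEdgeSet V Key)}
      (h : EdgeCyclic E) :
      PruneStep (.node E CWW CWR) .bad
  | wwElim {E : DepEdgeSet V Key} {CWW CWR : Set (DepEdgeSet V Key)}
      {cons : DepEdgeSet V Key} {T T' : V} {x : Key}
      (hc : cons ∈ CWW) (he : LEdge.mk T T' (DepLbl.WW x) ∈ cons)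
      (hcyc : EdgeCyclic (E ∪ {LEdge.mk T T' (DepLbl.WW x)} ∪ DerivedRWofWW E T T' x)) :
      PruneStep (.node E CWW CWR)
        (.node E ((CWW \ {cons}) ∪ {cons \ {LEdge.mk T T' (DepLbl.WW x)}}) CWR)
  | wrElim {E : DepEdgeSet V Key} {CWW CWR : Set (DepEdgeSet V Key)}
      {cons : DepEdgeSet V Key} {T S : V} {x : Key}
      (hc : cons ∈ CWR) (he : LEdge.mk T S (DepLbl.WR x) ∈ cons)
      (hcyc : EdgeCyclic (E ∪ {LEdge.mk T S (DepLbl.WR x)} ∪ DerivedRWofWR E T S x)) :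
      PruneStep (.node E CWW CWR)
        (.node E CWW ((CWR \ {cons}) ∪ {cons \ {LEdge.mk T S (DepLbl.WR x)}}))
  | wwIntro {E : DepEdgeSet V Key} {CWW CWR : Set (DepEdgeSet V Key)}
      {T T' : V} {x : Key}
      (hc : ({LEdge.mk T T' (DepLbl.WW x)} : DepEdgeSet V Key) ∈ CWW) :
      PruneStep (.node E CWW CWR)
        (.node (E ∪ {LEdge.mk T T' (DepLbl.WW x)} ∪ DerivedRWofWW E T T' x)
          (CWW \ {{LEdge.mk T T' (DepLbl.WW x)}}) CWR)
  | wrIntro {E : DepEdgeSet V Key} {CWW CWR : Set (DepEdgeSet V Key)}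
      {T S : V} {x : Key}
      (hc : ({LEdge.mk T S (DepLbl.WR x)} : DepEdgeSet V Key) ∈ CWR) :
      PruneStep (.node E CWW CWR)
        (.node (E ∪ {LEdge.mk T S (DepLbl.WR x)} ∪ DerivedRWofWR E T S x)
          CWW (CWR \ {{LEdge.mk T S (DepLbl.WR x)}}))

/-! ### Boolean encoding -/

/-- The edges occurring in some constraint of `G` (i.e. the edges carrying a
Boolean variable, besides the RW variables). -/
def ConsEdges (G : HyperPolygraph V Key) : DepEdgeSet V Key :=
  ⋃₀ (G.CWW ∪ G.CWR)

/-- The truth value, under the assignment `α`, of the literal associated with an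
edge: the constant true if the edge lies in `G.E`, and its variable's value
otherwise. -/
def EdgeVal (G : HyperPolygraph V Key) (α : DepEdge V Key → Prop)
    (e : DepEdge V Key) : Prop :=
  e ∈ G.E ∨ α e

/-- `α` satisfies the Boolean encoding `Φ_G` of the hyper-polygraph `G`. -/
def SatPhi (G : HyperPolygraph V Key) (α : DepEdge V Key → Prop) : Prop :=
  (∀ C ∈ G.CWW ∪ G.CWR, ∃ e ∈ C, α e) ∧
  (∀ C ∈ G.CWW ∪ G.CWR, ∀ e ∈ C, ∀ e' ∈ C, e ≠ e' → ¬(α e ∧ α e')) ∧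
  (∀ (x : Key) (T T' S : V), S ≠ T' →
      (LEdge.mk T T' (DepLbl.WW x) ∈ G.E ∨ LEdge.mk T T' (DepLbl.WW x) ∈ ConsEdges G) →
      (LEdge.mk T S (DepLbl.WR x) ∈ G.E ∨ LEdge.mk T S (DepLbl.WR x) ∈ ConsEdges G) →
      EdgeVal G α (LEdge.mk T T' (DepLbl.WW x)) →
      EdgeVal G α (LEdge.mk T S (DepLbl.WR x)) →
      α (LEdge.mk S T' (DepLbl.RW x)))

/-- The graph induced by the assignment `α`: `G.E` together with all constraint
edges and RW edges whose variables `α` sets to true. -/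
def InducedOf (G : HyperPolygraph V Key) (α : DepEdge V Key → Prop) :
    DepEdgeSet V Key :=
  G.E ∪ {e | e ∈ ConsEdges G ∧ α e} ∪
    {e | (∃ (x : Key) (S T' : V), S ≠ T' ∧ e = LEdge.mk S T' (DepLbl.RW x)) ∧ α e}

/-- `α` satisfies all 2-width-cycle clauses of `G`. -/
def SatPairClauses (G : HyperPolygraph V Key) (α : DepEdge V Key → Prop) : Prop :=
  (∀ e₁ e₂ : DepEdge V Key, e₁ ∈ ConsEdges G → e₂ ∈ ConsEdges G → e₁ ≠ e₂ →
      EReach G.E e₁.dst e₂.src → EReach G.E e₂.dst e₁.src → ¬(α e₁ ∧ α e₂)) ∧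
  (∀ (x : Key) (T T' S : V), T' ≠ T → T' ≠ S → EReach G.E T' S →
      LEdge.mk T T' (DepLbl.WW x) ∈ ConsEdges G →
      LEdge.mk T S (DepLbl.WR x) ∈ ConsEdges G →
      ¬(α (LEdge.mk T T' (DepLbl.WW x)) ∧ α (LEdge.mk T S (DepLbl.WR x))))

/-! Each clause of `P` forbids two constraint edges that, joined by paths of `G.E`, close a
cycle in the induced graph; in the derived-RW case the cycle runs through the RW edge
`S → T'` that `Φ_G` forces once `(T,T',WW,x)` and `(T,S,WR,x)` are both chosen. So an
assignment satisfying `Φ_G` with acyclic induced graph satisfies `P` as well. -/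

theorem EReach.mono {E E' : Set (LEdge V L)} (hEE' : E ⊆ E') {a b : V}
    (h : EReach E a b) : EReach E' a b :=
  Relation.ReflTransGen.mono (fun _ _ ⟨l, hl⟩ => ⟨l, hEE' hl⟩) a b h

theorem EStep.of_mem {E : Set (LEdge V L)} {e : LEdge V L} (he : e ∈ E) :
    EStep E e.src e.dst :=
  ⟨e.lbl, he⟩

theorem edgeCyclic_of_mem_of_eReach {E : Set (LEdge V L)} {e : LEdge V L} (he : e ∈ E)
    (h : EReach E e.dst e.src) : EdgeCyclic E :=
  ⟨e.src, Relation.TransGen.head' (EStep.of_mem he) h⟩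

section Induced

variable {G : HyperPolygraph V Key} {α : DepEdge V Key → Prop}

theorem subset_inducedOf : G.E ⊆ InducedOf G α :=
  fun _ he => Or.inl (Or.inl he)

theorem mem_inducedOf_of_mem_consEdges {e : DepEdge V Key} (he : e ∈ ConsEdges G)
    (hα : α e) : e ∈ InducedOf G α :=
  Or.inl (Or.inr ⟨he, hα⟩)

theorem rw_mem_inducedOf {x : Key} {S T' : V} (hST' : S ≠ T')
    (hα : α (LEdge.mk S T' (DepLbl.RW x))) : LEdge.mk S T' (DepLbl.RW x) ∈ InducedOf G α :=
  Or.inr ⟨⟨x, S, T', hST', rfl⟩, hα⟩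

theorem SatPhi.rw_of_consEdges (hφ : SatPhi G α) {x : Key} {T T' S : V} (hST' : S ≠ T')
    (hww : LEdge.mk T T' (DepLbl.WW x) ∈ ConsEdges G)
    (hwr : LEdge.mk T S (DepLbl.WR x) ∈ ConsEdges G)
    (hαww : α (LEdge.mk T T' (DepLbl.WW x))) (hαwr : α (LEdge.mk T S (DepLbl.WR x))) :
    α (LEdge.mk S T' (DepLbl.RW x)) :=
  hφ.2.2 x T T' S hST' (Or.inr hww) (Or.inr hwr) (Or.inr hαww) (Or.inr hαwr)

theorem SatPhi.satPairClauses_of_not_edgeCyclic (hφ : SatPhi G α)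
    (hac : ¬ EdgeCyclic (InducedOf G α)) : SatPairClauses G α := by
  have reach : ∀ {a b}, EReach G.E a b → EReach (InducedOf G α) a b :=
    EReach.mono subset_inducedOf
  constructor
  · rintro e₁ e₂ h₁ h₂ - hr₁ hr₂ ⟨hα₁, hα₂⟩
    have step₂ := EStep.of_mem (mem_inducedOf_of_mem_consEdges h₂ hα₂)
    exact hac <| edgeCyclic_of_mem_of_eReach (mem_inducedOf_of_mem_consEdges h₁ hα₁)
      (((reach hr₁).tail step₂).trans (reach hr₂))
  · rintro x T T' S - hT'S hT'reachS hww hwr ⟨hαww, hαwr⟩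
    have hrw := hφ.rw_of_consEdges (Ne.symm hT'S) hww hwr hαww hαwr
    exact hac <| edgeCyclic_of_mem_of_eReach (rw_mem_inducedOf (Ne.symm hT'S) hrw)
      (reach hT'reachS)

end Induced

theorem pair_clauses_equisatisfiable_general (V Key : Type)
    (G : HyperPolygraph V Key) :
    (∃ α : DepEdge V Key → Prop, SatPhi G α ∧ ¬ EdgeCyclic (InducedOf G α)) ↔
    (∃ α : DepEdge V Key → Prop,
        (SatPhi G α ∧ SatPairClauses G α) ∧ ¬ EdgeCyclic (InducedOf G α)) :=
  ⟨fun ⟨α, hφ, hac⟩ => ⟨α, ⟨hφ, hφ.satPairClauses_of_not_edgeCyclic hac⟩, hac⟩,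
    fun ⟨α, ⟨hφ, _⟩, hac⟩ => ⟨α, hφ, hac⟩⟩

/-- The Boolean encoding `Φ_G` and `F = Φ_G ∧ ⋀_{ρ ∈ P} ρ` (with `P` the 2-width-cycle
clauses) are equisatisfiable relative to acyclicity. -/
theorem pair_clauses_equisatisfiable (V Key : Type) [Finite V]
    (G : HyperPolygraph V Key) (hfin : ∀ C ∈ G.CWW ∪ G.CWR, C.Finite) :
    (∃ α : DepEdge V Key → Prop, SatPhi G α ∧ ¬ EdgeCyclic (InducedOf G α)) ↔
    (∃ α : DepEdge V Key → Prop,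
        (SatPhi G α ∧ SatPairClauses G α) ∧ ¬ EdgeCyclic (InducedOf G α)) :=
  pair_clauses_equisatisfiable_general V Key G

end DBIso
end

section
/- Let H be a history with hyper-polygraph G = (V, E, (C^WW, C^WR)), let S be a transaction and x a key with S ⊢ R(x,v), let C = {(T,S,WR,x) : T ⊢ W(x,v), T ≠ S} be the corresponding constraint in C^WR, and let e_i = (T_i,S,WR,x) ∈ C. If for every edge e_j = (T_j,S,WR,x) ∈ C with T_j ≠ T_i, the edge set E ∪ {e_j} ∪ {(S,T',RW,x) : (T_j,T',WW,x) ∈ E, S ≠ T'} is cyclic, then every acyclic directed labeled graph compatible with G contains e_i. -/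
namespace DBIso

variable {Key Val : Type}

variable {V L : Type}

theorem EdgeCyclic.mono {E F : Set (LEdge V L)} (hEF : E ⊆ F) (hE : EdgeCyclic E) :
    EdgeCyclic F :=
  let ⟨a, ha⟩ := hE
  ⟨a, Relation.TransGen.mono (fun _ _ ⟨l, hl⟩ => ⟨l, hEF hl⟩) a a ha⟩

theorem Compatible.union_derivedRWofWR_subset {G : HyperPolygraph V Key}
    {E' : DepEdgeSet V Key} (hE' : Compatible G E') {T S : V} {x : Key}
    (he : LEdge.mk T S (DepLbl.WR x) ∈ E') :
    G.E ∪ {LEdge.mk T S (DepLbl.WR x)} ∪ DerivedRWofWR G.E T S x ⊆ E' := by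
  obtain ⟨hGE, hRW, -⟩ := hE'
  rintro e ((he' | rfl) | ⟨T', hww, hST', rfl⟩)
  · exact hGE he'
  · exact he
  · exact hRW x S T T' hST' he (hGE hww)

theorem Compatible.mem_of_forall_ne_cyclic {G : HyperPolygraph V Key}
    {E' : DepEdgeSet V Key} (hE' : Compatible G E') (hacyc : ¬ EdgeCyclic E')
    {C : DepEdgeSet V Key} (hC : C ∈ G.CWR) {S : V} {x : Key}
    (hCS : ∀ e ∈ C, ∃ T, e = LEdge.mk T S (DepLbl.WR x)) {Ti : V}
    (hcyc : ∀ Tj, LEdge.mk Tj S (DepLbl.WR x) ∈ C → Tj ≠ Ti →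
      EdgeCyclic (G.E ∪ {LEdge.mk Tj S (DepLbl.WR x)} ∪ DerivedRWofWR G.E Tj S x)) :
    LEdge.mk Ti S (DepLbl.WR x) ∈ E' := by
  obtain ⟨e, ⟨heE', heC⟩, -⟩ := hE'.2.2 C (Or.inr hC)
  obtain ⟨Tj, rfl⟩ := hCS e heC
  by_cases hTj : Tj = Ti
  · exact hTj ▸ heE'
  · exact absurd ((hcyc Tj heC hTj).mono (hE'.union_derivedRWofWR_subset heE')) hacyc

theorem wr_constraint_forced_edge_general (Key Val : Type) (H : History Key Val)
    (S : H.Vert) (x : Key) (v : Val) (hread : S.1.FReads x v)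
    (C : DepEdgeSet H.Vert Key)
    (hC : C = {e | ∃ T : H.Vert, T.1.FWrites x v ∧ T ≠ S ∧
        e = LEdge.mk T S (DepLbl.WR x)})
    (Ti : H.Vert)
    (hcyc : ∀ Tj : H.Vert, LEdge.mk Tj S (DepLbl.WR x) ∈ C → Tj ≠ Ti →
      EdgeCyclic
        (H.hpg.E ∪ {LEdge.mk Tj S (DepLbl.WR x)} ∪ DerivedRWofWR H.hpg.E Tj S x)) :
    ∀ E' : DepEdgeSet H.Vert Key, Compatible H.hpg E' → ¬ EdgeCyclic E' →
      LEdge.mk Ti S (DepLbl.WR x) ∈ E' := by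
  subst hC
  intro E' hE' hacyc
  refine hE'.mem_of_forall_ne_cyclic hacyc ⟨x, S, v, hread, rfl⟩ ?_ hcyc
  rintro e ⟨T, -, -, rfl⟩
  exact ⟨T, rfl⟩

/-- WR pruning by elimination: if every other read-from candidate edge of the
constraint `C` creates a cycle with the known graph (together with its derived RW
edges), then every acyclic compatible graph contains the remaining edge `e_i`. -/
theorem wr_constraint_forced_edge (Key Val : Type) (H : History Key Val)
    (S : H.Vert) (x : Key) (v : Val) (hread : S.1.FReads x v)
    (C : DepEdgeSet H.Vert Key)
    (hC : C = {e | ∃ T : H.Vert, T.1.FWrites x v ∧ T ≠ S ∧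
        e = LEdge.mk T S (DepLbl.WR x)})
    (Ti : H.Vert) (hei : LEdge.mk Ti S (DepLbl.WR x) ∈ C)
    (hcyc : ∀ Tj : H.Vert, LEdge.mk Tj S (DepLbl.WR x) ∈ C → Tj ≠ Ti →
      EdgeCyclic
        (H.hpg.E ∪ {LEdge.mk Tj S (DepLbl.WR x)} ∪ DerivedRWofWR H.hpg.E Tj S x)) :
    ∀ E' : DepEdgeSet H.Vert Key, Compatible H.hpg E' → ¬ EdgeCyclic E' →
      LEdge.mk Ti S (DepLbl.WR x) ∈ E' :=
  wr_constraint_forced_edge_general Key Val H S x v hread C hC Ti hcyc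

end DBIso
end

section
/- For every history H with hyper-polygraph G: H satisfies SER if and only if H ⊨ Int and there exists an assignment α satisfying the Boolean encoding Φ_G such that the graph induced by α is acyclic. -/
namespace DBIso

variable {Key Val : Type}

variable {V L : Type}

/-!
Forward direction: given a commit order `co`, set a WW or RW variable to whether its edge
follows `co`, and a WR variable on `x` to whether its source is the `co`-last writer of `x`
before its target. Every edge of the induced graph then follows `co`, so it is acyclic.

Backward direction: extend the reachability order of the acyclic induced graph to a linear
order (Szpilrajn). A read of `x` by `S` reads from the writer `W` selected by its WR
constraint, and every other writer `U` before `S` is before `W`: otherwise the WW constraint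
selects `W → U`, and the RW clause adds `S → U`, closing a cycle.
-/

theorem not_edgeCyclic_of_eStep_le {E : Set (LEdge V L)} {r : V → V → Prop} [IsStrictOrder V r]
    (h : EStep E ≤ r) : ¬ EdgeCyclic E := by
  rintro ⟨a, ha⟩
  have har := Relation.TransGen.mono h _ _ ha
  rw [Relation.transGen_eq_self] at har
  exact irrefl a har

theorem exists_linearOrder_of_not_edgeCyclic {E : Set (LEdge V L)} (h : ¬ EdgeCyclic E) :
    ∃ _ : LinearOrder V, EStep E ≤ (· < ·) := by
  let _ : PartialOrder V :=
    { le := EReach E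
      le_refl := fun _ => .refl
      le_trans := fun _ _ _ => .trans
      le_antisymm := fun a b hab hba => by
        rcases Relation.reflTransGen_iff_eq_or_transGen.1 hab with hba' | hab'
        · exact hba'.symm
        · exact absurd ⟨a, hab'.trans_left hba⟩ h }
  refine ⟨(inferInstance : LinearOrder (LinearExtension V)), fun a b hab => ?_⟩
  have hlt : a < b := lt_of_le_of_ne (.single hab) (by rintro rfl; exact h ⟨a, .single hab⟩)
  exact toLinearExtension.monotone.strictMono_of_injective (fun _ _ h => h) hlt

section LiftLt

variable {α : Type*}

def liftLt (s : Set α) [LT s] (a b : α) : Prop :=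
  ∃ (ha : a ∈ s) (hb : b ∈ s), (⟨a, ha⟩ : s) < ⟨b, hb⟩

theorem liftLt_coe {s : Set α} [LT s] {a b : s} : liftLt s a b ↔ a < b :=
  ⟨fun ⟨_, _, h⟩ => h, fun h => ⟨a.2, b.2, h⟩⟩

theorem isStrictTotalOrderOn_liftLt (s : Set α) [LinearOrder s] :
    IsStrictTotalOrderOn s (liftLt s) := by
  refine ⟨fun _ _ ⟨ha, hb, _⟩ => ⟨ha, hb⟩, fun _ ⟨_, _, h⟩ => lt_irrefl _ h,
    fun _ _ _ ⟨ha, _, h₁⟩ ⟨_, hc, h₂⟩ => ⟨ha, hc, h₁.trans h₂⟩, fun a ha b hb hab => ?_⟩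
  rcases lt_or_gt_of_ne (Subtype.coe_ne_coe.1 hab : (⟨a, ha⟩ : s) ≠ ⟨b, hb⟩) with h | h
  · exact .inl ⟨ha, hb, h⟩
  · exact .inr ⟨hb, ha, h⟩

end LiftLt

section LastWriter

variable {co : Txn Key Val → Txn Key Val → Prop} {x : Key} {T T' S : Txn Key Val}

def LastWriterBefore (co : Txn Key Val → Txn Key Val → Prop) (x : Key) (T S : Txn Key Val) :
    Prop :=
  co T S ∧ T.WritesKey x ∧ ∀ U, co U S → U.WritesKey x → U = T ∨ co U T

def ReadsLastWriter (H : History Key Val) (co : Txn Key Val → Txn Key Val → Prop) : Prop :=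
  ∀ S ∈ H.txns, ∀ (x : Key) (v : Val), S.FReads x v →
    ∃ T, LastWriterBefore co x T S ∧ T.FWrites x v

theorem History.satSER_iff {H : History Key Val} :
    H.SatSER ↔ H.SatInt ∧ ∃ co, IsStrictTotalOrderOn H.txns co ∧
      (∀ T S, H.SO T S → co T S) ∧ ReadsLastWriter H co := by
  simp only [History.SatSER, ReadsLastWriter, LastWriterBefore, and_assoc]

theorem LastWriterBefore.ne (hirr : ∀ a, ¬ co a a) (h : LastWriterBefore co x T S) : T ≠ S :=
  fun hTS => hirr S (hTS ▸ h.1)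

theorem LastWriterBefore.unique (hirr : ∀ a, ¬ co a a)
    (htrans : ∀ a b c, co a b → co b c → co a c)
    (h : LastWriterBefore co x T S) (h' : LastWriterBefore co x T' S) : T = T' := by
  rcases h'.2.2 T h.1 h.2.1 with hTT' | hTT'
  · exact hTT'
  · rcases h.2.2 T' h'.1 h'.2.1 with hT'T | hT'T
    · exact hT'T.symm
    · exact absurd (htrans _ _ _ hTT' hT'T) (hirr T)

theorem LastWriterBefore.co_of_co {s : Set (Txn Key Val)} (hco : IsStrictTotalOrderOn s co)
    (h : LastWriterBefore co x T S) (hS : S ∈ s) (hT' : T' ∈ s) (hT'x : T'.WritesKey x)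
    (hTT' : co T T') (hST' : S ≠ T') : co S T' := by
  obtain ⟨-, hirr, htrans, htotal⟩ := hco
  refine (htotal S hS T' hT' hST').resolve_right fun hT'S => ?_
  rcases h.2.2 T' hT'S hT'x with hT'T | hT'T
  · exact hirr T (hT'T ▸ hTT')
  · exact hirr T (htrans _ _ _ hTT' hT'T)

end LastWriter

section HyperPolygraph

variable {H : History Key Val} {x : Key} {T T' S : H.Vert}

theorem ww_not_mem_hpg_E : LEdge.mk T T' (DepLbl.WW x) ∉ H.hpg.E := by
  rintro (⟨⟨⟩, -⟩ | ⟨_, _, ⟨⟩, -⟩)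

theorem writesKey_of_ww_mem_consEdges (h : LEdge.mk T T' (DepLbl.WW x) ∈ ConsEdges H.hpg) :
    T'.1.WritesKey x := by
  obtain ⟨C, ⟨y, A, B, -, hA, hB, rfl⟩ | ⟨y, S, v, -, rfl⟩, he⟩ := h
  · rcases he with he | he <;> cases he
    · exact hB
    · exact hA
  · obtain ⟨U, -, -, he⟩ := he
    cases he

end HyperPolygraph

def commitAssignment (H : History Key Val) (co : Txn Key Val → Txn Key Val → Prop) :
    DepEdge H.Vert Key → Prop
  | ⟨_, _, .SO⟩ => False
  | ⟨T, S, .WR x⟩ => LastWriterBefore co x T.1 S.1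
  | ⟨T, S, .WW _⟩ => co T.1 S.1
  | ⟨T, S, .RW _⟩ => co T.1 S.1

section CommitAssignment

variable {H : History Key Val} {co : Txn Key Val → Txn Key Val → Prop} {x : Key}
  {T T' S : H.Vert}

theorem commitAssignment_co {e : DepEdge H.Vert Key} (h : commitAssignment H co e) :
    co e.src.1 e.dst.1 := by
  rcases e with ⟨T, S, _ | x | x | x⟩
  exacts [h.elim, h.1, h, h]

theorem lastWriterBefore_of_mem_hpg_E (hco : IsStrictTotalOrderOn H.txns co)
    (hreads : ReadsLastWriter H co) (he : LEdge.mk T S (DepLbl.WR x) ∈ H.hpg.E) :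
    LastWriterBefore co x T.1 S.1 := by
  obtain ⟨⟨⟩, -⟩ | ⟨_, v, ⟨⟩, hr, -, -, huniq⟩ := he
  obtain ⟨T', hlast, hT'⟩ := hreads S.1 S.2 x v hr
  have hT'S := hlast.ne hco.2.1
  obtain rfl := huniq ⟨T', (hco.1 _ _ hlast.1).1⟩ hT' (hT'S ∘ congrArg Subtype.val)
  exact hlast

theorem exists_commitAssignment_mem (hco : IsStrictTotalOrderOn H.txns co)
    (hreads : ReadsLastWriter H co) {C : DepEdgeSet H.Vert Key}
    (hC : C ∈ H.hpg.CWW ∪ H.hpg.CWR) : ∃ e ∈ C, commitAssignment H co e := by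
  rcases hC with ⟨x, T, S, hTS, -, -, rfl⟩ | ⟨x, S, v, hr, rfl⟩
  · rcases hco.2.2.2 _ T.2 _ S.2 (Subtype.val_injective.ne hTS) with h | h
    · exact ⟨_, .inl rfl, h⟩
    · exact ⟨_, .inr rfl, h⟩
  · obtain ⟨T, hlast, hT⟩ := hreads S.1 S.2 x v hr
    exact ⟨_, ⟨⟨T, (hco.1 _ _ hlast.1).1⟩, hT, hlast.ne hco.2.1 ∘ congrArg Subtype.val, rfl⟩,
      hlast⟩

theorem commitAssignment_exclusive (hco : IsStrictTotalOrderOn H.txns co)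
    {C : DepEdgeSet H.Vert Key} (hC : C ∈ H.hpg.CWW ∪ H.hpg.CWR) :
    ∀ e ∈ C, ∀ e' ∈ C, e ≠ e' → ¬(commitAssignment H co e ∧ commitAssignment H co e') := by
  obtain ⟨-, hirr, htrans, -⟩ := hco
  rcases hC with ⟨x, T, S, -, -, -, rfl⟩ | ⟨x, S, v, -, rfl⟩
  · rintro e (rfl | rfl) e' (rfl | rfl) hne ⟨h, h'⟩ <;>
      first | exact hne rfl | exact hirr _ (htrans _ _ _ h h')
  · rintro _ ⟨T₁, -, -, rfl⟩ _ ⟨T₂, -, -, rfl⟩ hne ⟨h₁, h₂⟩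
    exact hne (by rw [Subtype.ext (h₁.unique hirr htrans h₂)])

theorem commitAssignment_rw_of_edgeVal (hco : IsStrictTotalOrderOn H.txns co)
    (hreads : ReadsLastWriter H co) (hST' : S ≠ T')
    (hWW : LEdge.mk T T' (DepLbl.WW x) ∈ H.hpg.E ∨
      LEdge.mk T T' (DepLbl.WW x) ∈ ConsEdges H.hpg)
    (hWWval : EdgeVal H.hpg (commitAssignment H co) (LEdge.mk T T' (DepLbl.WW x)))
    (hWRval : EdgeVal H.hpg (commitAssignment H co) (LEdge.mk T S (DepLbl.WR x))) :
    commitAssignment H co (LEdge.mk S T' (DepLbl.RW x)) := by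
  have hTT' : co T.1 T'.1 := Or.resolve_left hWWval ww_not_mem_hpg_E
  have hT'x := writesKey_of_ww_mem_consEdges (hWW.resolve_left ww_not_mem_hpg_E)
  have hlast : LastWriterBefore co x T.1 S.1 :=
    Or.elim hWRval (lastWriterBefore_of_mem_hpg_E hco hreads) id
  exact hlast.co_of_co hco S.2 T'.2 hT'x hTT' (Subtype.val_injective.ne hST')

theorem satPhi_commitAssignment (hco : IsStrictTotalOrderOn H.txns co)
    (hreads : ReadsLastWriter H co) : SatPhi H.hpg (commitAssignment H co) :=
  ⟨fun _ => exists_commitAssignment_mem hco hreads, fun _ => commitAssignment_exclusive hco,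
    fun _ _ _ _ hST' hWW _ => commitAssignment_rw_of_edgeVal hco hreads hST' hWW⟩

theorem not_edgeCyclic_inducedOf_commitAssignment (hco : IsStrictTotalOrderOn H.txns co)
    (hso : ∀ T S, H.SO T S → co T S) (hreads : ReadsLastWriter H co) :
    ¬ EdgeCyclic (InducedOf H.hpg (commitAssignment H co)) := by
  have : IsStrictOrder H.Vert (fun a b => co a.1 b.1) :=
    { irrefl := fun a => hco.2.1 a.1, trans := fun a b c => hco.2.2.1 a.1 b.1 c.1 }
  refine not_edgeCyclic_of_eStep_le (r := fun a b => co a.1 b.1) fun a b ⟨l, hab⟩ => ?_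
  rcases hab with ((⟨-, h⟩ | ⟨x, v, hl, hrest⟩) | ⟨-, h⟩) | ⟨-, h⟩
  · exact hso _ _ h
  · obtain rfl : l = .WR x := hl
    exact (lastWriterBefore_of_mem_hpg_E hco hreads (.inr ⟨x, v, rfl, hrest⟩)).1
  · exact commitAssignment_co h
  · exact commitAssignment_co h

end CommitAssignment

section LinearExtension

variable {H : History Key Val} [LinearOrder H.Vert] {α : DepEdge H.Vert Key → Prop}

theorem so_le_liftLt (hlt : EStep (InducedOf H.hpg α) ≤ (· < ·)) :
    ∀ T S, H.SO T S → liftLt H.txns T S := fun T S hso =>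
  have hT := (H.so_mem T S hso).1
  have hS := (H.so_mem T S hso).2
  liftLt_coe.2 (hlt ⟨T, hT⟩ ⟨S, hS⟩ ⟨_, .inl (.inl (.inl ⟨rfl, hso⟩))⟩)

theorem readsLastWriter_of_satPhi (hφ : SatPhi H.hpg α)
    (hlt : EStep (InducedOf H.hpg α) ≤ (· < ·)) : ReadsLastWriter H (liftLt H.txns) := by
  obtain ⟨hexists, -, hrw⟩ := hφ
  intro S hS x v hr
  let S' : H.Vert := ⟨S, hS⟩
  have hCWR : {e | ∃ T : H.Vert, T.1.FWrites x v ∧ T ≠ S' ∧ e = LEdge.mk T S' (DepLbl.WR x)} ∈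
      H.hpg.CWR := ⟨x, S', v, hr, rfl⟩
  obtain ⟨_, ⟨W, hW, hWS, rfl⟩, hαW⟩ := hexists _ (.inr hCWR)
  have hWcons : LEdge.mk W S' (DepLbl.WR x) ∈ ConsEdges H.hpg := ⟨_, .inr hCWR, W, hW, hWS, rfl⟩
  refine ⟨W.1, ⟨liftLt_coe.2 (hlt _ _ ⟨_, .inl (.inr ⟨hWcons, hαW⟩)⟩), ⟨v, hW⟩, ?_⟩, hW⟩
  rintro U ⟨hU, _, hUS⟩ hUx
  let U' : H.Vert := ⟨U, hU⟩
  by_cases hUW : U' = W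
  · exact .inl (congrArg Subtype.val hUW)
  have hCWW : {LEdge.mk U' W (DepLbl.WW x), LEdge.mk W U' (DepLbl.WW x)} ∈ H.hpg.CWW :=
    ⟨x, U', W, hUW, hUx, ⟨v, hW⟩, rfl⟩
  obtain ⟨e, he | he, hαe⟩ := hexists _ (.inl hCWW) <;> subst he
  · exact .inr (liftLt_coe.2 (hlt _ _ ⟨_, .inl (.inr ⟨⟨_, .inl hCWW, .inl rfl⟩, hαe⟩)⟩))
  · -- `S` reads `x` from `W`, which overwrites `U`: the RW clause puts `S` before `U`
    have hSU : S' ≠ U' := hUS.ne'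
    have hαSU := hrw x W U' S' hSU (.inr ⟨_, .inl hCWW, .inr rfl⟩) (.inr hWcons) (.inr hαe)
      (.inr hαW)
    exact absurd (hlt _ _ ⟨_, .inr ⟨⟨x, S', U', hSU, rfl⟩, hαSU⟩⟩) hUS.not_gt

end LinearExtension

/-- Theorem (SER via the Boolean encoding): `H` satisfies SER iff `H ⊨ Int` and
there is an assignment satisfying `Φ_G` (for `G` the hyper-polygraph of `H`) whose
induced graph is acyclic. -/
theorem ser_iff_encoding (Key Val : Type) (H : History Key Val) :
    H.SatSER ↔
      H.SatInt ∧
      ∃ α : DepEdge H.Vert Key → Prop,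
        SatPhi H.hpg α ∧ ¬ EdgeCyclic (InducedOf H.hpg α) := by
  rw [History.satSER_iff]
  refine and_congr_right fun _ => ⟨?_, ?_⟩
  · rintro ⟨co, hco, hso, hreads⟩
    exact ⟨commitAssignment H co, satPhi_commitAssignment hco hreads,
      not_edgeCyclic_inducedOf_commitAssignment hco hso hreads⟩
  · rintro ⟨α, hφ, hacyc⟩
    obtain ⟨_, hlt⟩ := exists_linearOrder_of_not_edgeCyclic hacyc
    exact ⟨liftLt H.txns, isStrictTotalOrderOn_liftLt H.txns, so_le_liftLt hlt,
      readsLastWriter_of_satPhi hφ hlt⟩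

end DBIso
end
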